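/- arXiv:2106.00387 — 2 statements merged into one kernel-verified Lean document; each statement's English description precedes it below -/
import Mathlib

section
/- Let (G, M, I) be a formal context and let D be a family of subsets of M (the premises of the classification rules of a binary decision tree) satisfying: (i) for every ρ ∈ D the extent ρ′ is nonempty; (ii) distinct premises in D have distinct extents (ρ₁ ≠ ρ₂ in D implies ρ₁′ ≠ ρ₂′); (iii) for any ρ₁, ρ₂ ∈ D with ρ₁ ⊄ ρ₂ and ρ₂ ⊄ ρ₁, there exist attributes m₁ ∈ ρ₁ and m₂ ∈ ρ₂ such that no object g ∈ G satisfies both (g, m₁) ∈ I and (g, m₂) ∈ I. Then for all ρ₁, ρ₂ ∈ D one has ρ₁ ⊆ ρ₂ if and only if ρ₂′ ⊆ ρ₁′ (equivalently, ρ₁″ ⊆ ρ₂″); hence the map ρ ↦ (ρ′, ρ″) is an order isomorphism from (D, ⊆) onto its image in the concept lattice ordered by inclusion of intents, i.e., the set of formal concepts induced by a decision tree is order-isomorphic to the decision tree. -/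
/-!
Antitonicity of `ρ ↦ ρ′` gives one direction. Conversely, suppose `ρ₂′ ⊆ ρ₁′` but `ρ₁ ⊄ ρ₂`.
If `ρ₂ ⊆ ρ₁`, then also `ρ₁′ ⊆ ρ₂′`, so the two premises have equal extents, contradicting
injectivity. Otherwise they are incomparable and carry mutually exclusive attributes
`m₁ ∈ ρ₁`, `m₂ ∈ ρ₂`; an object of the nonempty extent `ρ₂′ ⊆ ρ₁′` would have both.
The statement about intents follows since `ρ″ ⊆ σ″ ↔ σ′ ⊆ ρ′` in any formal context.
-/

def extent {G M : Type} (I : G → M → Prop) (ρ : Set M) : Set G :=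
  {g | ∀ m ∈ ρ, I g m}

def intent {G M : Type} (I : G → M → Prop) (A : Set G) : Set M :=
  {m | ∀ g ∈ A, I g m}

section FormalContext

variable {G M : Type} (I : G → M → Prop)

theorem extent_eq_lowerPolar : extent I = lowerPolar I := rfl

theorem intent_eq_upperPolar : intent I = upperPolar I := rfl

theorem extent_anti : Antitone (extent I) := lowerPolar_anti I

theorem intent_extent_subset_iff {ρ₁ ρ₂ : Set M} :
    intent I (extent I ρ₁) ⊆ intent I (extent I ρ₂) ↔ extent I ρ₂ ⊆ extent I ρ₁ := by
  simp only [extent_eq_lowerPolar, intent_eq_upperPolar]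
  refine ⟨fun h => ?_, fun h => upperPolar_anti I h⟩
  simpa only [lowerPolar_upperPolar_lowerPolar] using lowerPolar_anti I h

variable {I}

theorem not_extent_subset_of_exclusive {ρ₁ ρ₂ : Set M} {m₁ m₂ : M}
    (hne : (extent I ρ₂).Nonempty) (hm₁ : m₁ ∈ ρ₁) (hm₂ : m₂ ∈ ρ₂)
    (hexcl : ∀ g, ¬(I g m₁ ∧ I g m₂)) : ¬extent I ρ₂ ⊆ extent I ρ₁ := fun hsub =>
  let ⟨g, hg⟩ := hne
  hexcl g ⟨hsub hg m₁ hm₁, hg m₂ hm₂⟩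

end FormalContext

/-- The conditions on the family of premises of the classification rules of a binary decision
tree. -/
structure IsDecisionTree {G M : Type} (I : G → M → Prop) (D : Set (Set M)) : Prop where
  extent_nonempty : ∀ ρ ∈ D, (extent I ρ).Nonempty
  extent_injOn : Set.InjOn (extent I) D
  exists_exclusive : ∀ ρ₁ ∈ D, ∀ ρ₂ ∈ D, ¬(ρ₁ ⊆ ρ₂) → ¬(ρ₂ ⊆ ρ₁) →
    ∃ m₁ ∈ ρ₁, ∃ m₂ ∈ ρ₂, ∀ g, ¬(I g m₁ ∧ I g m₂)

namespace IsDecisionTree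

variable {G M : Type} {I : G → M → Prop} {D : Set (Set M)}

theorem subset_of_extent_subset (hD : IsDecisionTree I D) {ρ₁ ρ₂ : Set M}
    (h₁ : ρ₁ ∈ D) (h₂ : ρ₂ ∈ D) (hE : extent I ρ₂ ⊆ extent I ρ₁) : ρ₁ ⊆ ρ₂ := by
  by_contra hns
  by_cases hr : ρ₂ ⊆ ρ₁
  · have heq : extent I ρ₁ = extent I ρ₂ := (extent_anti I hr).antisymm hE
    exact hns (hD.extent_injOn h₁ h₂ heq).subset
  · obtain ⟨m₁, hm₁, m₂, hm₂, hexcl⟩ := hD.exists_exclusive ρ₁ h₁ ρ₂ h₂ hns hr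
    exact not_extent_subset_of_exclusive (hD.extent_nonempty ρ₂ h₂) hm₁ hm₂ hexcl hE

theorem subset_iff_extent_subset (hD : IsDecisionTree I D) {ρ₁ ρ₂ : Set M}
    (h₁ : ρ₁ ∈ D) (h₂ : ρ₂ ∈ D) : ρ₁ ⊆ ρ₂ ↔ extent I ρ₂ ⊆ extent I ρ₁ :=
  ⟨fun h => extent_anti I h, hD.subset_of_extent_subset h₁ h₂⟩

end IsDecisionTree

/-- Let `D` be the family of premises of a binary decision tree over the context
`(G, M, I)`, i.e. a family of subsets of `M` such that: (i) every premise has a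
nonempty extent; (ii) distinct premises have distinct extents; (iii) any two
inclusion-incomparable premises contain a pair of mutually exclusive attributes.
Then for all `ρ₁, ρ₂ ∈ D`, `ρ₁ ⊆ ρ₂` iff `ρ₂′ ⊆ ρ₁′` iff `ρ₁″ ⊆ ρ₂″`; hence
`ρ ↦ (ρ′, ρ″)` is an order isomorphism from `(D, ⊆)` onto its image in the
concept lattice ordered by inclusion of intents. -/
theorem decision_tree_concepts_order_isomorphic
    (G M : Type) (I : G → M → Prop) (D : Set (Set M))
    (hne : ∀ ρ ∈ D, (extent I ρ).Nonempty)
    (hinj : ∀ ρ₁ ∈ D, ∀ ρ₂ ∈ D, ρ₁ ≠ ρ₂ → extent I ρ₁ ≠ extent I ρ₂)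
    (hexcl : ∀ ρ₁ ∈ D, ∀ ρ₂ ∈ D, ¬(ρ₁ ⊆ ρ₂) → ¬(ρ₂ ⊆ ρ₁) →
      ∃ m₁ ∈ ρ₁, ∃ m₂ ∈ ρ₂, ∀ g : G, ¬(I g m₁ ∧ I g m₂)) :
    ∀ ρ₁ ∈ D, ∀ ρ₂ ∈ D,
      (ρ₁ ⊆ ρ₂ ↔ extent I ρ₂ ⊆ extent I ρ₁) ∧
      (ρ₁ ⊆ ρ₂ ↔ intent I (extent I ρ₁) ⊆ intent I (extent I ρ₂)) := by
  have hD : IsDecisionTree I D :=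
    ⟨hne, fun ρ₁ h₁ ρ₂ h₂ => not_imp_not.mp (hinj ρ₁ h₁ ρ₂ h₂), hexcl⟩
  intro ρ₁ h₁ ρ₂ h₂
  have key := hD.subset_iff_extent_subset h₁ h₂
  exact ⟨key, key.trans (intent_extent_subset_iff I).symm⟩
end

section
/- Let (G, M, I) be a formal context with G finite, and let D be a family of subsets of M such that the family of extents E = {ρ′ | ρ ∈ D} is a laminar family of nonempty subsets of G (any two members of E are nested or disjoint) containing the extent of the empty premise, i.e., the set G itself. Then the set of formal concepts L = {(ρ′, ρ″) | ρ ∈ D} ∪ {(M′, M″)}, consisting of the concepts induced by the premises together with the bottom concept whose extent is M′ = {g ∈ G | ∀ m ∈ M, (g,m) ∈ I}, ordered by inclusion of extents, is a lattice: every pair of concepts in L has a least upper bound and a greatest lower bound within L. In particular, the extent M′ of the bottom concept is contained in the extent of every concept in L, and if two concepts of L have disjoint extents then M′ = ∅ and their meet in L is the bottom concept. -/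
/-- Proposition 1 of the paper. Let `(G, M, I)` be a formal context with `G`
finite and `D` a family of premises whose extents form a laminar family of
nonempty subsets of `G` containing the extent `G` of the empty premise. Then
the set of concepts `L = {(ρ′, ρ″) | ρ ∈ D} ∪ {(M′, M″)}`, ordered by inclusion
of extents, is a lattice: every pair of concepts in `L` has a least upper bound
and a greatest lower bound within `L`. Moreover, the extent `M′` of the bottom
concept is contained in the extent of every concept of `L`, and if two concepts
of `L` have disjoint extents then `M′ = ∅` and their meet in `L` is the bottom
concept. -/
theorem decision_lattice_is_lattice
    (G M : Type) [Finite G] (I : G → M → Prop) (D : Set (Set M))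
    (hlam : ∀ ρ₁ ∈ D, ∀ ρ₂ ∈ D,
      extent I ρ₁ ⊆ extent I ρ₂ ∨ extent I ρ₂ ⊆ extent I ρ₁ ∨
        extent I ρ₁ ∩ extent I ρ₂ = ∅)
    (hne : ∀ ρ ∈ D, (extent I ρ).Nonempty)
    (huniv : (Set.univ : Set G) ∈ (fun ρ => extent I ρ) '' D) :
    ∀ bot : Set G × Set M,
      bot = (extent I (Set.univ : Set M), intent I (extent I (Set.univ : Set M))) →
    ∀ L : Set (Set G × Set M),
      L = (fun ρ => (extent I ρ, intent I (extent I ρ))) '' D ∪ {bot} →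
      (∀ p ∈ L, bot.1 ⊆ p.1) ∧
      (∀ p ∈ L, ∀ q ∈ L,
        (∃ j ∈ L, p.1 ⊆ j.1 ∧ q.1 ⊆ j.1 ∧
          ∀ r ∈ L, p.1 ⊆ r.1 → q.1 ⊆ r.1 → j.1 ⊆ r.1) ∧
        (∃ k ∈ L, k.1 ⊆ p.1 ∧ k.1 ⊆ q.1 ∧
          ∀ r ∈ L, r.1 ⊆ p.1 → r.1 ⊆ q.1 → r.1 ⊆ k.1)) ∧
      (∀ p ∈ L, ∀ q ∈ L, p.1 ∩ q.1 = ∅ →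
        bot.1 = ∅ ∧ ∀ r ∈ L, r.1 ⊆ p.1 → r.1 ⊆ q.1 → r.1 ⊆ bot.1) := by
  intro bot hbot L hL
  have hbotle : ∀ ρ : Set M, bot.1 ⊆ extent I ρ := by
    intro ρ g hg m _
    rw [hbot] at hg
    exact hg m (Set.mem_univ m)
  have hmem : ∀ p ∈ L, p = bot ∨ ∃ ρ ∈ D, p.1 = extent I ρ := by
    intro p hp
    rw [hL] at hp
    rcases hp with ⟨ρ, hρ, rfl⟩ | hp
    · exact Or.inr ⟨ρ, hρ, rfl⟩
    · exact Or.inl hp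
  have hbotL : ∀ p ∈ L, bot.1 ⊆ p.1 := by
    intro p hp
    rcases hmem p hp with rfl | ⟨ρ, _, hρ⟩
    · exact subset_rfl
    · rw [hρ]; exact hbotle ρ
  have hbotmem : bot ∈ L := by rw [hL]; exact Or.inr rfl
  obtain ⟨ρu, hρu, hρuext⟩ := huniv
  refine ⟨hbotL, ?_, ?_⟩
  · intro p hp q hq
    constructor
    · -- join
      by_cases hcase : p.1 ∪ q.1 ⊆ bot.1
      · exact ⟨bot, hbotmem, (Set.union_subset_iff.mp hcase).1,
          (Set.union_subset_iff.mp hcase).2, fun r hr _ _ => hbotL r hr⟩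
      · -- p.1 ∪ q.1 is nonempty
        have hpne : (p.1 ∪ q.1).Nonempty := by
          rcases Set.eq_empty_or_nonempty (p.1 ∪ q.1) with h | h
          · exact absurd (h ▸ Set.empty_subset _) hcase
          · exact h
        set T : Set (Set G) := {A | (∃ ρ ∈ D, A = extent I ρ) ∧ p.1 ∪ q.1 ⊆ A} with hT
        have hTne : T.Nonempty := ⟨Set.univ, ⟨ρu, hρu, hρuext.symm⟩, Set.subset_univ _⟩
        obtain ⟨A₀, hA₀T, hA₀min⟩ : ∃ a ∈ T, ∀ a' ∈ T, id a' ≤ id a → id a = id a' := by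
          obtain ⟨a, ha, hmin⟩ := (Set.toFinite T).exists_minimal hTne
          exact ⟨a, ha, fun b hb h => le_antisymm (hmin hb h) h⟩
        obtain ⟨⟨ρ₀, hρ₀D, hA₀⟩, hsub₀⟩ := hA₀T
        have hleast : ∀ B ∈ T, A₀ ⊆ B := by
          rintro B ⟨⟨ρ₁, hρ₁D, hB⟩, hsubB⟩
          rcases hlam ρ₀ hρ₀D ρ₁ hρ₁D with h | h | h
          · rw [hA₀, hB]; exact h
          · have : A₀ = B := hA₀min B ⟨⟨ρ₁, hρ₁D, hB⟩, hsubB⟩ (hA₀ ▸ hB ▸ h)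
            exact this ▸ subset_rfl
          · exfalso
            obtain ⟨g, hg⟩ := hpne
            exact absurd (Set.mem_inter (hA₀ ▸ hsub₀ hg) (hB ▸ hsubB hg))
              (h ▸ Set.notMem_empty g)
        refine ⟨(extent I ρ₀, intent I (extent I ρ₀)), ?_, ?_, ?_, ?_⟩
        · rw [hL]; exact Or.inl ⟨ρ₀, hρ₀D, rfl⟩
        · exact hA₀ ▸ (Set.union_subset_iff.mp hsub₀).1
        · exact hA₀ ▸ (Set.union_subset_iff.mp hsub₀).2
        · intro r hr hpr hqr
          rcases hmem r hr with rfl | ⟨ρ, hρD, hρr⟩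
          · exact absurd (Set.union_subset hpr hqr) hcase
          · have : A₀ ⊆ r.1 := hleast r.1 ⟨⟨ρ, hρD, hρr⟩, Set.union_subset hpr hqr⟩
            exact fun g hg => this (hA₀ ▸ hg)
    · -- meet
      rcases hmem p hp with hpb | ⟨ρp, hρpD, hρp⟩
      · exact ⟨p, hp, subset_rfl, hpb ▸ hbotL q hq, fun r _ hr _ => hr⟩
      rcases hmem q hq with hqb | ⟨ρq, hρqD, hρq⟩
      · exact ⟨q, hq, hqb ▸ hbotL p hp, subset_rfl, fun r _ _ hr => hr⟩
      rcases hlam ρp hρpD ρq hρqD with h | h | h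
      · exact ⟨p, hp, subset_rfl, hρp ▸ hρq ▸ h, fun r _ hr _ => hr⟩
      · exact ⟨q, hq, hρp ▸ hρq ▸ h, subset_rfl, fun r _ _ hr => hr⟩
      · refine ⟨bot, hbotmem, hbotL p hp, hbotL q hq, ?_⟩
        intro r hr hrp hrq g hg
        have : g ∈ extent I ρp ∩ extent I ρq := ⟨hρp ▸ hrp hg, hρq ▸ hrq hg⟩
        exact absurd this (h ▸ Set.notMem_empty g)
  · intro p hp q hq hdisj
    have hbe : bot.1 = ∅ := by
      have : bot.1 ⊆ p.1 ∩ q.1 := Set.subset_inter (hbotL p hp) (hbotL q hq)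
      exact Set.subset_eq_empty (hdisj ▸ this) rfl
    refine ⟨hbe, fun r _ hrp hrq => ?_⟩
    have : r.1 ⊆ p.1 ∩ q.1 := Set.subset_inter hrp hrq
    rw [hdisj] at this
    exact hbe ▸ this
end
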